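/- Suppose the matching-like removal theorem holds: for all ε > 0 there exists δ > 0 such that every matching-like f : V^n → [0,1] with E[f] ≥ ε satisfies ⟨f, Af⟩ > δ. Then the general removal theorem holds with the same δ: every g : V^n → [0,1] that is ε-far from independent satisfies ⟨g, Ag⟩ > δ. -/
import Mathlib


open Finset

variable {V : Type*} [Fintype V] [DecidableEq V]

/-- Product measure on `V^n`. -/
def pmu (μ : V → ℝ) {n : ℕ} (x : Fin n → V) : ℝ := ∏ i : Fin n, μ (x i)

/-- The bilinear form `⟨f, A^{⊗n} g⟩` on `V^n`, w.r.t. the stationary product measure. -/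
def ipow (μ : V → ℝ) (A : V → V → ℝ) {n : ℕ} (f g : (Fin n → V) → ℝ) : ℝ :=
  ∑ x : Fin n → V, ∑ y : Fin n → V,
    pmu μ x * (∏ i : Fin n, A (x i) (y i)) * f x * g y

/-- Expectation on `V^n` w.r.t. the product measure. -/
def expec (μ : V → ℝ) {n : ℕ} (f : (Fin n → V) → ℝ) : ℝ :=
  ∑ x : Fin n → V, pmu μ x * f x

/-- A set `W ⊆ V^n` is independent if `⟨1_W, A^{⊗n} 1_W⟩ = 0`. -/
def IsIndep (μ : V → ℝ) (A : V → V → ℝ) {n : ℕ} (W : Finset (Fin n → V)) : Prop :=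
  ipow μ A (fun x => if x ∈ W then 1 else 0) (fun x => if x ∈ W then 1 else 0) = 0

/-- `f` is matching-like: every independent set carries at most half the mass of `f`. -/
def MatchingLike (μ : V → ℝ) (A : V → V → ℝ) {n : ℕ} (f : (Fin n → V) → ℝ) : Prop :=
  ∀ W : Finset (Fin n → V), IsIndep μ A W →
    expec μ (fun x => (if x ∈ W then 1 else 0) * f x) ≤ expec μ f / 2

/-- `g` is `ε`-far from independent. -/
def EpsFar (μ : V → ℝ) (A : V → V → ℝ) {n : ℕ} (ε : ℝ) (g : (Fin n → V) → ℝ) : Prop :=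
  ∀ U : Finset (Fin n → V), IsIndep μ A U →
    expec μ (fun x => (if x ∈ U then 0 else 1) * g x) > ε

lemma claim42 {X : Type*} [Fintype X] [DecidableEq X] (π : X → ℝ) (hπ : ∀ x, 0 < π x)
    (B : X → X → ℝ) (hB0 : ∀ x y, 0 ≤ B x y) (hBsw : ∀ x y, B x y = 0 → B y x = 0)
    (g : X → ℝ) (hg0 : ∀ x, 0 ≤ g x) :
    ∃ f : X → ℝ, (∀ x, 0 ≤ f x) ∧ (∀ x, f x ≤ g x) ∧
      (∀ x y, f x < g x → f y < g y → B x y = 0) ∧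
      (∀ W : Finset X, (∀ x ∈ W, ∀ y ∈ W, B x y = 0) →
        ∑ x ∈ W, π x * f x ≤ (∑ x, π x * f x) / 2) := by
  classical
  set w : X → ℝ := fun x => π x * g x with hww
  have hw0 : ∀ x, 0 ≤ w x := fun x => mul_nonneg (hπ x).le (hg0 x)
  set K : Set (X × X → ℝ) :=
    {m | (∀ p, 0 ≤ m p) ∧ (∀ p, m p = m (p.2, p.1)) ∧
         (∀ p, B p.1 p.2 = 0 → m p = 0) ∧ (∀ a, ∑ b, m (a, b) ≤ w a)} with hKdef
  have hKsub : K ⊆ Set.Icc (0 : X × X → ℝ) (fun p => w p.1) := by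
    rintro m ⟨h0, hsym, hsupp, hmar⟩
    refine ⟨fun p => h0 p, fun p => ?_⟩
    calc m p = m (p.1, p.2) := by rw [Prod.mk.eta]
      _ ≤ ∑ b, m (p.1, b) := Finset.single_le_sum (fun b _ => h0 _) (mem_univ p.2)
      _ ≤ w p.1 := hmar p.1
  have hKclosed : IsClosed K := by
    have h1 : IsClosed {m : X × X → ℝ | ∀ p, 0 ≤ m p} := by
      have : {m : X × X → ℝ | ∀ p, 0 ≤ m p} = ⋂ p, {m | 0 ≤ m p} := by ext m; simp [Set.mem_iInter]
      rw [this]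
      exact isClosed_iInter fun p => isClosed_le continuous_const (continuous_apply p)
    have h2 : IsClosed {m : X × X → ℝ | ∀ p : X × X, m p = m (p.2, p.1)} := by
      have : {m : X × X → ℝ | ∀ p : X × X, m p = m (p.2, p.1)} =
          ⋂ p : X × X, {m | m p = m (p.2, p.1)} := by ext m; simp [Set.mem_iInter]
      rw [this]
      exact isClosed_iInter fun p => isClosed_eq (continuous_apply p) (continuous_apply _)
    have h3 : IsClosed {m : X × X → ℝ | ∀ p : X × X, B p.1 p.2 = 0 → m p = 0} := by
      have : {m : X × X → ℝ | ∀ p : X × X, B p.1 p.2 = 0 → m p = 0} =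
          ⋂ p : X × X, ⋂ (_ : B p.1 p.2 = 0), {m | m p = 0} := by ext m; simp [Set.mem_iInter]
      rw [this]
      exact isClosed_iInter fun p => isClosed_iInter fun _ =>
        isClosed_eq (continuous_apply p) continuous_const
    have h4 : IsClosed {m : X × X → ℝ | ∀ a, ∑ b, m (a, b) ≤ w a} := by
      have : {m : X × X → ℝ | ∀ a, ∑ b, m (a, b) ≤ w a} =
          ⋂ a, {m | ∑ b, m (a, b) ≤ w a} := by ext m; simp [Set.mem_iInter]
      rw [this]
      exact isClosed_iInter fun a =>
        isClosed_le (by exact continuous_finset_sum _ fun b _ => continuous_apply _)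
          continuous_const
    have : K = {m : X × X → ℝ | ∀ p, 0 ≤ m p} ∩ {m | ∀ p : X × X, m p = m (p.2, p.1)} ∩
        {m | ∀ p : X × X, B p.1 p.2 = 0 → m p = 0} ∩ {m | ∀ a, ∑ b, m (a, b) ≤ w a} := by
      ext m; simp [hKdef, Set.mem_setOf_eq, and_assoc]
    rw [this]
    exact (((h1.inter h2).inter h3).inter h4)
  have hKcpt : IsCompact K := (isCompact_Icc).of_isClosed_subset hKclosed hKsub
  have h0K : (0 : X × X → ℝ) ∈ K := by
    refine ⟨fun p => le_rfl, fun p => rfl, fun p _ => rfl, fun a => ?_⟩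
    simp [hw0 a]
  obtain ⟨m, hmK, hmax⟩ := hKcpt.exists_isMaxOn ⟨0, h0K⟩
    ((continuous_finset_sum univ fun p _ => continuous_apply p).continuousOn)
  obtain ⟨hm0, hmsym, hmsupp, hmmar⟩ := hmK
  set S : X → ℝ := fun x => ∑ b, m (x, b) with hSdef
  have hS0 : ∀ x, 0 ≤ S x := fun x => Finset.sum_nonneg fun b _ => hm0 _
  refine ⟨fun x => S x / π x, fun x => div_nonneg (hS0 x) (hπ x).le, ?_, ?_, ?_⟩
  · intro x
    rw [div_le_iff₀ (hπ x)]
    calc S x ≤ w x := hmmar x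
      _ = g x * π x := by rw [hww]; ring
  · -- deficient set is independent
    intro x y hx hy
    by_contra hB
    have hSx : S x < w x := by
      have h := (div_lt_iff₀ (hπ x)).mp hx
      show S x < π x * g x
      nlinarith
    have hSy : S y < w y := by
      have h := (div_lt_iff₀ (hπ y)).mp hy
      show S y < π y * g y
      nlinarith
    have hByx : B y x ≠ 0 := fun h => hB (hBsw y x h)
    set ε : ℝ := min (w x - S x) (w y - S y) / 2 with hεdef
    have hε : 0 < ε := by
      have := lt_min (sub_pos.mpr hSx) (sub_pos.mpr hSy)
      simp only [hεdef]
      linarith [lt_min (sub_pos.mpr hSx) (sub_pos.mpr hSy)]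
    have h2εx : 2 * ε ≤ w x - S x := by
      have := min_le_left (w x - S x) (w y - S y); simp only [hεdef]; linarith
    have h2εy : 2 * ε ≤ w y - S y := by
      have := min_le_right (w x - S x) (w y - S y); simp only [hεdef]; linarith
    set m' : X × X → ℝ := fun p =>
      m p + ((if p = (x, y) then ε else 0) + (if p = (y, x) then ε else 0)) with hm'def
    have hite : ∀ (p q : X × X), (0:ℝ) ≤ (if p = q then ε else 0) := by
      intro p q; split
      · exact hε.le
      · exact le_rfl
    have hsum1 : ∀ a : X, ∑ b, (if ((a, b) : X × X) = (x, y) then ε else 0)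
        = if a = x then ε else 0 := by
      intro a
      by_cases ha : a = x <;> simp [Prod.ext_iff, ha]
    have hsum2 : ∀ a : X, ∑ b, (if ((a, b) : X × X) = (y, x) then ε else 0)
        = if a = y then ε else 0 := by
      intro a
      by_cases ha : a = y <;> simp [Prod.ext_iff, ha]
    have hm'K : m' ∈ K := by
      refine ⟨?_, ?_, ?_, ?_⟩
      · intro p
        exact add_nonneg (hm0 p) (add_nonneg (hite p _) (hite p _))
      · rintro ⟨a, b⟩
        have e1 : (((b, a) : X × X) = (x, y)) ↔ (((a, b) : X × X) = (y, x)) := by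
          simp [Prod.ext_iff, and_comm]
        have e2 : (((b, a) : X × X) = (y, x)) ↔ (((a, b) : X × X) = (x, y)) := by
          simp [Prod.ext_iff, and_comm]
        show m (a, b) + ((if ((a, b) : X × X) = (x, y) then ε else 0)
              + (if ((a, b) : X × X) = (y, x) then ε else 0))
            = m (b, a) + ((if ((b, a) : X × X) = (x, y) then ε else 0)
              + (if ((b, a) : X × X) = (y, x) then ε else 0))
        have h' : m (a, b) = m (b, a) := hmsym (a, b)
        rw [h', if_congr e1 rfl rfl, if_congr e2 rfl rfl]
        ring
      · rintro ⟨a, b⟩ hBab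
        have hp1 : ((a, b) : X × X) ≠ (x, y) := by
          intro h; rw [h] at hBab; exact hB hBab
        have hp2 : ((a, b) : X × X) ≠ (y, x) := by
          intro h; rw [h] at hBab; exact hByx hBab
        simp [hm'def, hmsupp (a, b) hBab, hp1, hp2]
      · intro a
        have hmar' : ∑ b, m' (a, b)
            = S a + ((if a = x then ε else 0) + (if a = y then ε else 0)) := by
          have e0 : ∑ b, m' (a, b) = ∑ b, (m (a, b)
              + ((if ((a, b) : X × X) = (x, y) then ε else 0)
                + (if ((a, b) : X × X) = (y, x) then ε else 0))) := rfl
          rw [e0, Finset.sum_add_distrib, Finset.sum_add_distrib, hsum1 a, hsum2 a]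
        rw [hmar']
        by_cases hax : a = x
        · subst hax
          by_cases hay : a = y
          · rw [if_pos rfl, if_pos hay]; linarith
          · rw [if_pos rfl, if_neg hay]; linarith
        · by_cases hay : a = y
          · subst hay; rw [if_neg hax, if_pos rfl]; linarith
          · rw [if_neg hax, if_neg hay]; simpa using hmmar a
    have hstrict : ∑ p, m p < ∑ p, m' p := by
      have e1 : ∑ p : X × X, (if p = ((x, y) : X × X) then ε else 0) = ε := by
        simp
      have e2 : ∑ p : X × X, (if p = ((y, x) : X × X) then ε else 0) = ε := by
        simp
      have e0 : ∑ p : X × X, m' p = ∑ p : X × X, (m p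
          + ((if p = ((x, y) : X × X) then ε else 0)
            + (if p = ((y, x) : X × X) then ε else 0))) := rfl
      rw [e0, Finset.sum_add_distrib, Finset.sum_add_distrib, e1, e2]
      linarith
    exact absurd (hmax hm'K) (not_le.mpr hstrict)
  · -- matching-like
    intro W hW
    have hπf : ∀ x, π x * (S x / π x) = S x := fun x => by
      rw [mul_comm]; exact div_mul_cancel₀ _ (hπ x).ne'
    have hin : ∀ x ∈ W, S x = ∑ b ∈ Wᶜ, m (x, b) := by
      intro x hx
      have hzero : ∑ b ∈ W, m (x, b) = 0 :=
        Finset.sum_eq_zero fun b hb => hmsupp (x, b) (hW x hx b hb)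
      have hsplit : ∑ b ∈ W, m (x, b) + ∑ b ∈ Wᶜ, m (x, b) = ∑ b, m (x, b) :=
        Finset.sum_add_sum_compl W _
      rw [hSdef]; dsimp only; linarith
    have key : ∑ x ∈ W, S x ≤ ∑ b ∈ Wᶜ, S b := by
      calc ∑ x ∈ W, S x = ∑ x ∈ W, ∑ b ∈ Wᶜ, m (x, b) := Finset.sum_congr rfl hin
        _ = ∑ b ∈ Wᶜ, ∑ x ∈ W, m (x, b) := Finset.sum_comm
        _ = ∑ b ∈ Wᶜ, ∑ x ∈ W, m (b, x) := by
            refine Finset.sum_congr rfl fun b _ => Finset.sum_congr rfl fun x _ => ?_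
            exact hmsym (x, b)
        _ ≤ ∑ b ∈ Wᶜ, ∑ x, m (b, x) := by
            refine Finset.sum_le_sum fun b _ => ?_
            exact Finset.sum_le_sum_of_subset_of_nonneg (Finset.subset_univ W)
              (fun x _ _ => hm0 _)
        _ = ∑ b ∈ Wᶜ, S b := rfl
    have htot : ∑ x, π x * (S x / π x) = ∑ x ∈ W, S x + ∑ x ∈ Wᶜ, S x := by
      rw [Finset.sum_congr rfl fun x _ => hπf x, ← Finset.sum_add_sum_compl W S]
    have hWsum : ∑ x ∈ W, π x * (S x / π x) = ∑ x ∈ W, S x :=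
      Finset.sum_congr rfl fun x _ => hπf x
    rw [hWsum, htot]
    linarith


lemma pmu_pos (μ : V → ℝ) (hμpos : ∀ v, 0 < μ v) {n : ℕ} (x : Fin n → V) :
    0 < pmu μ x := Finset.prod_pos fun i _ => hμpos _

lemma indep_iff (μ : V → ℝ) (hμpos : ∀ v, 0 < μ v)
    (A : V → V → ℝ) (hA0 : ∀ x y, 0 ≤ A x y) {n : ℕ} (W : Finset (Fin n → V)) :
    IsIndep μ A W ↔ ∀ x ∈ W, ∀ y ∈ W, (∏ i : Fin n, A (x i) (y i)) = 0 := by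
  classical
  unfold IsIndep ipow
  have htnn : ∀ a b : Fin n → V, (0:ℝ) ≤ pmu μ a * (∏ i : Fin n, A (a i) (b i)) *
      (if a ∈ W then (1:ℝ) else 0) * (if b ∈ W then (1:ℝ) else 0) := by
    intro a b
    have h1 : (0:ℝ) ≤ (if a ∈ W then (1:ℝ) else 0) := by split <;> norm_num
    have h2 : (0:ℝ) ≤ (if b ∈ W then (1:ℝ) else 0) := by split <;> norm_num
    have h3 : (0:ℝ) ≤ ∏ i : Fin n, A (a i) (b i) := Finset.prod_nonneg fun i _ => hA0 _ _
    exact mul_nonneg (mul_nonneg (mul_nonneg (pmu_pos μ hμpos a).le h3) h1) h2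
  constructor
  · intro h x hx y hy
    have h1 := (Finset.sum_eq_zero_iff_of_nonneg
      (fun a _ => Finset.sum_nonneg fun b _ => htnn a b)).mp h x (mem_univ x)
    have h2 := (Finset.sum_eq_zero_iff_of_nonneg (fun b _ => htnn x b)).mp h1 y (mem_univ y)
    rw [if_pos hx, if_pos hy, mul_one, mul_one] at h2
    rcases mul_eq_zero.mp h2 with h3 | h3
    · exact absurd h3 (ne_of_gt (pmu_pos μ hμpos x))
    · exact h3
  · intro h
    refine Finset.sum_eq_zero fun x _ => Finset.sum_eq_zero fun y _ => ?_
    show pmu μ x * (∏ i : Fin n, A (x i) (y i)) * (if x ∈ W then (1:ℝ) else 0) *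
      (if y ∈ W then (1:ℝ) else 0) = 0
    by_cases hx : x ∈ W
    · by_cases hy : y ∈ W
      · rw [h x hx y hy]; ring
      · rw [if_neg hy]; ring
    · rw [if_neg hx]; ring

theorem stmt_15
    (μ : V → ℝ) (hμpos : ∀ v, 0 < μ v) (hμ1 : ∑ v : V, μ v = 1)
    (A : V → V → ℝ) (hA0 : ∀ x y, 0 ≤ A x y) (hAstoch : ∀ x, ∑ y : V, A x y = 1)
    (hrev : ∀ x y, μ x * A x y = μ y * A y x)
    (ε δ : ℝ) (hε : 0 < ε) (hδ : 0 < δ)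
    (hmatch : ∀ n : ℕ, ∀ f : (Fin n → V) → ℝ, (∀ x, f x ∈ Set.Icc (0:ℝ) 1) →
      MatchingLike μ A f → ε ≤ expec μ f → δ < ipow μ A f f) :
    ∀ n : ℕ, ∀ g : (Fin n → V) → ℝ, (∀ x, g x ∈ Set.Icc (0:ℝ) 1) →
      EpsFar μ A ε g → δ < ipow μ A g g := by
  classical
  intro n g hg hfar
  set B : (Fin n → V) → (Fin n → V) → ℝ := fun x y => ∏ i : Fin n, A (x i) (y i) with hBdef
  have hB0 : ∀ x y, 0 ≤ B x y := fun x y => Finset.prod_nonneg fun i _ => hA0 _ _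
  have hrevP : ∀ x y : Fin n → V, pmu μ x * B x y = pmu μ y * B y x := by
    intro x y
    show (∏ i : Fin n, μ (x i)) * (∏ i : Fin n, A (x i) (y i))
        = (∏ i : Fin n, μ (y i)) * (∏ i : Fin n, A (y i) (x i))
    rw [← Finset.prod_mul_distrib, ← Finset.prod_mul_distrib]
    exact Finset.prod_congr rfl fun i _ => hrev _ _
  have hBsw : ∀ x y, B x y = 0 → B y x = 0 := by
    intro x y h
    have h2 := hrevP x y
    rw [h, mul_zero] at h2
    rcases mul_eq_zero.mp h2.symm with h3 | h3
    · exact absurd h3 (ne_of_gt (pmu_pos μ hμpos y))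
    · exact h3
  obtain ⟨f, hf0, hfg, hdef, hml⟩ := claim42 (pmu μ) (pmu_pos μ hμpos) B hB0 hBsw g
    (fun x => (hg x).1)
  set U : Finset (Fin n → V) := univ.filter (fun x => f x < g x) with hUdef
  have hUind : IsIndep μ A U := by
    rw [indep_iff μ hμpos A hA0]
    intro x hx y hy
    rw [hUdef, mem_filter] at hx hy
    exact hdef x y hx.2 hy.2
  have h1 := hfar U hUind
  have h2 : expec μ (fun x => (if x ∈ U then 0 else 1) * g x) ≤ expec μ f := by
    unfold expec
    refine Finset.sum_le_sum fun x _ => ?_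
    show pmu μ x * ((if x ∈ U then (0:ℝ) else 1) * g x) ≤ pmu μ x * f x
    by_cases hx : x ∈ U
    · rw [if_pos hx, zero_mul, mul_zero]
      exact mul_nonneg (pmu_pos μ hμpos x).le (hf0 x)
    · have hfx : f x = g x := by
        have : ¬ f x < g x := by
          rw [hUdef, mem_filter] at hx
          intro hc; exact hx ⟨mem_univ x, hc⟩
        exact le_antisymm (hfg x) (not_lt.mp this)
      rw [if_neg hx, one_mul, hfx]
  have hεf : ε ≤ expec μ f := le_of_lt (lt_of_lt_of_le h1 h2)
  have hf01 : ∀ x, f x ∈ Set.Icc (0:ℝ) 1 := fun x => ⟨hf0 x, (hfg x).trans (hg x).2⟩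
  have hfml : MatchingLike μ A f := by
    intro W hW
    have hWB := (indep_iff μ hμpos A hA0 W).mp hW
    have hkey := hml W hWB
    have hLHS : expec μ (fun x => (if x ∈ W then (1:ℝ) else 0) * f x)
        = ∑ x ∈ W, pmu μ x * f x := by
      unfold expec
      show (∑ x : Fin n → V, pmu μ x * ((if x ∈ W then (1:ℝ) else 0) * f x))
          = ∑ x ∈ W, pmu μ x * f x
      rw [Finset.sum_congr rfl (fun x (_ : x ∈ univ) =>
        show pmu μ x * ((if x ∈ W then (1:ℝ) else 0) * f x)
          = if x ∈ W then pmu μ x * f x else 0 by split <;> ring)]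
      rw [Finset.sum_ite_mem, univ_inter]
    rw [hLHS]
    exact hkey
  have hδf := hmatch n f hf01 hfml hεf
  have hmono : ipow μ A f f ≤ ipow μ A g g := by
    unfold ipow
    refine Finset.sum_le_sum fun x _ => Finset.sum_le_sum fun y _ => ?_
    have hc : (0:ℝ) ≤ pmu μ x * ∏ i : Fin n, A (x i) (y i) :=
      mul_nonneg (pmu_pos μ hμpos x).le (hB0 x y)
    have hfg2 : f x * f y ≤ g x * g y :=
      mul_le_mul (hfg x) (hfg y) (hf0 y) (hg x).1
    calc pmu μ x * (∏ i : Fin n, A (x i) (y i)) * f x * f y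
        = (pmu μ x * ∏ i : Fin n, A (x i) (y i)) * (f x * f y) := by ring
      _ ≤ (pmu μ x * ∏ i : Fin n, A (x i) (y i)) * (g x * g y) :=
          mul_le_mul_of_nonneg_left hfg2 hc
      _ = pmu μ x * (∏ i : Fin n, A (x i) (y i)) * g x * g y := by ring
  linarith
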